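/- Let σ be the smallest nonzero singular value of I − P₀. Then for every s ∈ [0,1], ‖π_s − π₀‖₂ ≤ (2 s n / σ) · ‖π_s (P₁ − P₀)‖₂, where ‖·‖₂ denotes the Euclidean norm on ℝⁿ and π_s(P₁ − P₀) is the row vector obtained by right-multiplying π_s by P₁ − P₀. -/

import Mathlib

open Matrix BigOperators

/-- A row-stochastic matrix: nonnegative entries, each row sums to 1. -/
def IsStochastic {n : ℕ} (P : Matrix (Fin n) (Fin n) ℝ) : Prop :=
  (∀ i j, 0 ≤ P i j) ∧ ∀ i, ∑ j, P i j = 1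

/-- Irreducibility: every state can reach every other state. -/
def MCIrreducible {n : ℕ} (P : Matrix (Fin n) (Fin n) ℝ) : Prop :=
  ∀ i j, ∃ m : ℕ, 0 < (P ^ m) i j

/-- Aperiodicity (for a finite chain): every state has eventually positive return
probabilities. -/
def MCAperiodic {n : ℕ} (P : Matrix (Fin n) (Fin n) ℝ) : Prop :=
  ∀ i : Fin n, ∃ N : ℕ, ∀ m : ℕ, N ≤ m → 0 < (P ^ m) i i

/-- A probability (row) vector. -/
def IsProbVec {n : ℕ} (v : Fin n → ℝ) : Prop :=
  (∀ i, 0 ≤ v i) ∧ ∑ i, v i = 1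

/-- Total variation distance between two vectors. -/
noncomputable def tvDist {n : ℕ} (μ ν : Fin n → ℝ) : ℝ :=
  (1 / 2) * ∑ i, |μ i - ν i|

/-- Euclidean norm on ℝⁿ. -/
noncomputable def euclNorm {n : ℕ} (v : Fin n → ℝ) : ℝ :=
  Real.sqrt (∑ i, (v i) ^ 2)

/-- Mixing time of `P` with stationary distribution `π`. -/
noncomputable def mixingTime {n : ℕ} (P : Matrix (Fin n) (Fin n) ℝ)
    (π : Fin n → ℝ) (ε : ℝ) : ℕ :=
  sInf {T : ℕ | ∀ ν : Fin n → ℝ, IsProbVec ν → tvDist (ν ᵥ* (P ^ T)) π ≤ ε}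

/-- The interpolation `P_t = (1-t)·P₀ + t·P₁`. -/
noncomputable def Pt {n : ℕ} (P₀ P₁ : Matrix (Fin n) (Fin n) ℝ) (t : ℝ) :
    Matrix (Fin n) (Fin n) ℝ :=
  (1 - t) • P₀ + t • P₁

/-- The ordered product `P_{(j+1)/T} P_{(j+2)/T} ⋯ P_{k/T}` (identity if `j ≥ k`). -/
noncomputable def prodSeg {n : ℕ} (P₀ P₁ : Matrix (Fin n) (Fin n) ℝ) (T j k : ℕ) :
    Matrix (Fin n) (Fin n) ℝ :=
  ((List.range (k - j)).map (fun i => Pt P₀ P₁ (((j : ℝ) + (i : ℝ) + 1) / (T : ℝ)))).prod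

/-- The ordered product `P_{1/T} P_{2/T} ⋯ P_{k/T}`. -/
noncomputable def adiabProd {n : ℕ} (P₀ P₁ : Matrix (Fin n) (Fin n) ℝ) (T k : ℕ) :
    Matrix (Fin n) (Fin n) ℝ :=
  prodSeg P₀ P₁ T 0 k

/-- Adiabatic time of the adiabatic evolution between `P₀` and `P₁`,
with `π₁` the stationary distribution of `P₁`. -/
noncomputable def adiabaticTime {n : ℕ} (P₀ P₁ : Matrix (Fin n) (Fin n) ℝ)
    (π₁ : Fin n → ℝ) (ε : ℝ) : ℕ :=
  sInf {T' : ℕ | ∀ T : ℕ, T' ≤ T → ∀ ν : Fin n → ℝ, IsProbVec ν →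
    tvDist ((ν ᵥ* P₀) ᵥ* adiabProd P₀ P₁ T T) π₁ ≤ ε}

/-- Stable adiabatic time, where `π s` is the stationary distribution of `P_s`. -/
noncomputable def stableAdiabaticTime {n : ℕ} (P₀ P₁ : Matrix (Fin n) (Fin n) ℝ)
    (π : ℝ → Fin n → ℝ) (ε : ℝ) : ℕ :=
  sInf {T : ℕ | ∀ k : ℕ, 1 ≤ k → k ≤ T →
    tvDist ((π 0) ᵥ* adiabProd P₀ P₁ T k) (π ((k : ℝ) / (T : ℝ))) < ε}

/-- `t_mix(ε) = sup_{s ∈ [0,1]} t_mix(P_s, ε)`, where `π s` is the stationary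
distribution of `P_s`. -/
noncomputable def maxMixingTime {n : ℕ} (P₀ P₁ : Matrix (Fin n) (Fin n) ℝ)
    (π : ℝ → Fin n → ℝ) (ε : ℝ) : ℕ :=
  sSup {m : ℕ | ∃ s ∈ Set.Icc (0 : ℝ) 1, m = mixingTime (Pt P₀ P₁ s) (π s) ε}

/-- `s` is a singular value of `A`: `s ≥ 0` and `s²` is an eigenvalue of `A Aᵀ`
(for a left eigenvector). -/
def IsSingularValue {n : ℕ} (A : Matrix (Fin n) (Fin n) ℝ) (s : ℝ) : Prop :=
  0 ≤ s ∧ ∃ v : Fin n → ℝ, v ≠ 0 ∧ v ᵥ* (A * Aᵀ) = (s ^ 2) • v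

/-- `σ` is the smallest nonzero (positive) singular value of `A`. -/
def IsSmallestPosSingularValue {n : ℕ} (A : Matrix (Fin n) (Fin n) ℝ) (σ : ℝ) : Prop :=
  0 < σ ∧ IsSingularValue A σ ∧ ∀ s : ℝ, 0 < s → IsSingularValue A s → σ ≤ s

/-!
Put `A = 1 - P₀` and `d = π_s - π₀`. Stationarity of `π₀` and `π_s` gives
`d A = s · π_s (P₁ - P₀)`, and irreducibility makes `π₀` span the left kernel of `A`.
Write `d = a π₀ + q` with `q ⊥ π₀`. Then `q` is orthogonal to the kernel of `A Aᵀ`, so expanding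
`q` in an eigenbasis of `A Aᵀ` gives `σ ‖q‖ ≤ ‖q A‖ = s ‖π_s (P₁ - P₀)‖`. Since `d` sums to `0`
and `π₀` to `1`, `a = -∑ q`, so `|a| ≤ √n ‖q‖`. Hence `‖d‖ ≤ (√n + 1) ‖q‖ ≤ 2n ‖q‖`.
-/

open Module.End (HasEigenvalue)
open scoped RealInnerProductSpace

theorem LinearMap.IsSymmetric.mul_norm_sq_le_inner_self {E : Type*} [NormedAddCommGroup E]
    [InnerProductSpace ℝ E] [FiniteDimensional ℝ E] {T : E →ₗ[ℝ] E} (hT : T.IsSymmetric)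
    {c : ℝ} (hc : ∀ μ, HasEigenvalue T μ → μ ≠ 0 → c ≤ μ) {x : E}
    (hx : x ∈ (LinearMap.ker T)ᗮ) : c * ‖x‖ ^ 2 ≤ ⟪T x, x⟫ := by
  set b := hT.eigenvectorBasis rfl
  set μ := hT.eigenvalues rfl
  have hTx : ⟪T x, x⟫ = ∑ i, μ i * ⟪b i, x⟫ ^ 2 := by
    rw [← b.sum_inner_mul_inner]
    refine Finset.sum_congr rfl fun i _ => ?_
    rw [hT, hT.apply_eigenvectorBasis, real_inner_smul_right, real_inner_comm]
    simp only [RCLike.ofReal_real_eq_id, id_eq, μ, b]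
    ring
  rw [hTx, ← b.sum_sq_inner_right, Finset.mul_sum]
  refine Finset.sum_le_sum fun i _ => ?_
  by_cases hμ : μ i = 0
  · have hb : b i ∈ LinearMap.ker T := by
      rw [LinearMap.mem_ker, hT.apply_eigenvectorBasis]
      simp [μ, hμ]
    simp [(Submodule.mem_orthogonal _ x).1 hx _ hb]
  · exact mul_le_mul_of_nonneg_right (hc _ (hT.hasEigenvalue_eigenvalues rfl i) hμ) (sq_nonneg _)

theorem norm_le_mul_norm_sub_smul {E : Type*} [NormedAddCommGroup E] [InnerProductSpace ℝ E]
    {d p e : E} (hed : ⟪e, d⟫ = 0) (hep : ⟪e, p⟫ = 1) (a : ℝ) :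
    ‖d‖ ≤ (‖e‖ * ‖p‖ + 1) * ‖d - a • p‖ := by
  set q := d - a • p
  have ha : |a| ≤ ‖e‖ * ‖q‖ := by
    have heq : ⟪e, q⟫ = -a := by
      rw [inner_sub_right, real_inner_smul_right, hed, hep]
      ring
    simpa [heq] using abs_real_inner_le_norm e q
  calc ‖d‖ = ‖a • p + q‖ := by rw [add_sub_cancel]
    _ ≤ |a| * ‖p‖ + ‖q‖ := by simpa [norm_smul] using norm_add_le (a • p) q
    _ ≤ ‖e‖ * ‖q‖ * ‖p‖ + ‖q‖ := by gcongr
    _ = (‖e‖ * ‖p‖ + 1) * ‖q‖ := by ring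

theorem Matrix.vecMul_pow_eq_self {ι R : Type*} [Fintype ι] [DecidableEq ι] [Semiring R]
    {M : Matrix ι ι R} {x : ι → R} (hx : x ᵥ* M = x) (m : ℕ) : x ᵥ* M ^ m = x := by
  induction m with
  | zero => simp
  | succ m ih => rw [pow_succ, ← vecMul_vecMul, ih, hx]

theorem Matrix.vecMul_one_sub_eq_zero_iff {ι R : Type*} [Fintype ι] [DecidableEq ι] [Ring R]
    {M : Matrix ι ι R} {x : ι → R} : x ᵥ* (1 - M) = 0 ↔ x ᵥ* M = x := by
  rw [vecMul_sub, vecMul_one, sub_eq_zero, eq_comm]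

theorem Matrix.dotProduct_sub_smul_self_eq_zero {ι K : Type*} [Fintype ι] [Field K]
    {p : ι → K} (hp : p ⬝ᵥ p ≠ 0) (d : ι → K) : p ⬝ᵥ (d - (p ⬝ᵥ d / p ⬝ᵥ p) • p) = 0 := by
  rw [dotProduct_sub, dotProduct_smul, smul_eq_mul, div_mul_cancel₀ _ hp, sub_self]

section

variable {n : ℕ}

theorem euclNorm_eq_norm_toLp (v : Fin n → ℝ) :
    euclNorm v = ‖(WithLp.toLp 2 v : EuclideanSpace ℝ (Fin n))‖ := by
  simp [euclNorm, EuclideanSpace.norm_eq]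

theorem euclNorm_sq (v : Fin n → ℝ) : euclNorm v ^ 2 = v ⬝ᵥ v := by
  rw [euclNorm, Real.sq_sqrt (by positivity)]
  simp [dotProduct, sq]

theorem euclNorm_smul (c : ℝ) (v : Fin n → ℝ) : euclNorm (c • v) = |c| * euclNorm v := by
  simp only [euclNorm_eq_norm_toLp, WithLp.toLp_smul, norm_smul, Real.norm_eq_abs]

theorem euclNorm_le_mul_euclNorm_sub_smul {d p : Fin n → ℝ} (hd : ∑ i, d i = 0)
    (hp : ∑ i, p i = 1) (a : ℝ) :
    euclNorm d ≤ (√n * euclNorm p + 1) * euclNorm (d - a • p) := by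
  set e : EuclideanSpace ℝ (Fin n) := WithLp.toLp 2 1
  have he : ‖e‖ = √n := by simp [e, EuclideanSpace.norm_eq]
  have hinner : ∀ v, ⟪e, WithLp.toLp 2 v⟫ = ∑ i, v i := fun v => by
    simp [e, EuclideanSpace.inner_eq_star_dotProduct, dotProduct_one]
  have h := norm_le_mul_norm_sub_smul ((hinner d).trans hd) ((hinner p).trans hp) a
  simpa only [euclNorm_eq_norm_toLp, he, WithLp.toLp_sub, WithLp.toLp_smul] using h

theorem IsProbVec.pos_card {p : Fin n → ℝ} (hp : IsProbVec p) : 0 < n :=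
  Nat.pos_of_ne_zero fun h => by subst h; simpa using hp.2

theorem IsProbVec.ne_zero {p : Fin n → ℝ} (hp : IsProbVec p) : p ≠ 0 := by
  rintro rfl
  simpa using hp.2

theorem IsProbVec.euclNorm_le_one {p : Fin n → ℝ} (hp : IsProbVec p) : euclNorm p ≤ 1 := by
  have hle : ∀ i, p i ≤ 1 := fun i =>
    hp.2 ▸ Finset.single_le_sum (fun j _ => hp.1 j) (Finset.mem_univ i)
  refine Real.sqrt_le_one.2 ?_
  calc ∑ i, p i ^ 2 ≤ ∑ i, p i :=
        Finset.sum_le_sum fun i _ => pow_le_of_le_one (hp.1 i) (hle i) two_ne_zero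
    _ = 1 := hp.2

theorem Matrix.inner_toEuclideanLin_mul_transpose_self (A : Matrix (Fin n) (Fin n) ℝ)
    (x : EuclideanSpace ℝ (Fin n)) :
    ⟪toEuclideanLin (A * Aᵀ) x, x⟫ = euclNorm (x.ofLp ᵥ* A) ^ 2 := by
  rw [euclNorm_sq, ← dotProduct_mulVec, ← mulVec_transpose, mulVec_mulVec]
  simp [EuclideanSpace.inner_eq_star_dotProduct, toLpLin_apply]

namespace IsSmallestPosSingularValue

variable {A : Matrix (Fin n) (Fin n) ℝ} {σ : ℝ}

theorem sq_le_of_hasEigenvalue (hσ : IsSmallestPosSingularValue A σ) {μ : ℝ}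
    (hμ : HasEigenvalue (toEuclideanLin (A * Aᵀ)) μ) (hμ0 : μ ≠ 0) : σ ^ 2 ≤ μ := by
  obtain ⟨v, hv⟩ := hμ.exists_hasEigenvector
  have hTv : toEuclideanLin (A * Aᵀ) v = μ • v := hv.apply_eq_smul
  have hμ_nonneg : 0 ≤ μ := by
    have h := inner_toEuclideanLin_mul_transpose_self A v
    rw [hTv, real_inner_smul_left, real_inner_self_eq_norm_sq] at h
    exact nonneg_of_mul_nonneg_left (h ▸ sq_nonneg _) (pow_pos (norm_pos_iff.2 hv.2) 2)
  have hsing : IsSingularValue A √μ := by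
    refine ⟨Real.sqrt_nonneg μ, v.ofLp, by simpa using hv.2, ?_⟩
    rw [Real.sq_sqrt hμ_nonneg, ← mulVec_transpose, transpose_mul, transpose_transpose]
    simpa [toLpLin_apply] using congrArg WithLp.ofLp hTv
  have hσμ := hσ.2.2 _ (Real.sqrt_pos.2 (lt_of_le_of_ne hμ_nonneg (Ne.symm hμ0))) hsing
  exact (Real.le_sqrt hσ.1.le hμ_nonneg).1 hσμ

theorem mul_euclNorm_le (hσ : IsSmallestPosSingularValue A σ) {q : Fin n → ℝ}
    (hq : ∀ x, x ᵥ* A = 0 → x ⬝ᵥ q = 0) : σ * euclNorm q ≤ euclNorm (q ᵥ* A) := by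
  have hT : (toEuclideanLin (A * Aᵀ)).IsSymmetric :=
    isSymmetric_toEuclideanLin_iff.2 (isHermitian_mul_conjTranspose_self A)
  have hker : WithLp.toLp 2 q ∈ (LinearMap.ker (toEuclideanLin (A * Aᵀ)))ᗮ := by
    refine (Submodule.mem_orthogonal _ _).2 fun y hy => ?_
    have hyA : y.ofLp ᵥ* A = 0 := by
      have h := inner_toEuclideanLin_mul_transpose_self A y
      rw [LinearMap.mem_ker.1 hy, inner_zero_left, eq_comm, euclNorm_sq] at h
      simpa using h
    simpa [EuclideanSpace.inner_eq_star_dotProduct, dotProduct_comm] using hq _ hyA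
  have h := hT.mul_norm_sq_le_inner_self (fun _ => hσ.sq_le_of_hasEigenvalue) hker
  rw [inner_toEuclideanLin_mul_transpose_self, ← euclNorm_eq_norm_toLp, ← mul_pow] at h
  exact (pow_le_pow_iff_left₀ (mul_nonneg hσ.1.le (Real.sqrt_nonneg _)) (Real.sqrt_nonneg _)
    two_ne_zero).1 h

end IsSmallestPosSingularValue

namespace IsStochastic

variable {P : Matrix (Fin n) (Fin n) ℝ}

theorem mulVec_one (hP : IsStochastic P) : P *ᵥ 1 = 1 := by
  ext i
  simpa [mulVec, dotProduct] using hP.2 i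

theorem sum_vecMul (hP : IsStochastic P) (x : Fin n → ℝ) : ∑ j, (x ᵥ* P) j = ∑ i, x i := by
  rw [← dotProduct_one, ← dotProduct_mulVec, hP.mulVec_one, dotProduct_one]

/-- The triangle inequality gives `|x| ≤ |x| P` entrywise, and both sides have the same sum. -/
theorem abs_vecMul_eq (hP : IsStochastic P) {x : Fin n → ℝ} (hx : x ᵥ* P = x) :
    |x| ᵥ* P = |x| := by
  have hle : ∀ j ∈ Finset.univ, |x| j ≤ (|x| ᵥ* P) j := fun j _ =>
    calc |x| j = |∑ i, x i * P i j| := by rw [Pi.abs_apply, ← vecMul_apply_eq_sum, hx]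
      _ ≤ ∑ i, |x i * P i j| := Finset.abs_sum_le_sum_abs _ _
      _ = (|x| ᵥ* P) j := by simp [vecMul_apply_eq_sum, abs_mul, abs_of_nonneg (hP.1 _ j)]
  funext j
  exact ((Finset.sum_eq_sum_iff_of_le hle).1 (hP.sum_vecMul _).symm j (Finset.mem_univ j)).symm

theorem pos_of_vecMul_eq (hP : IsStochastic P) (hirr : MCIrreducible P) {x : Fin n → ℝ}
    (hx : x ᵥ* P = x) (hx0 : 0 ≤ x) {i : Fin n} (hi : 0 < x i) (j : Fin n) : 0 < x j := by
  obtain ⟨m, hm⟩ := hirr i j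
  rw [← vecMul_pow_eq_self hx m, vecMul_apply_eq_sum]
  exact (mul_pos hi hm).trans_le <| Finset.single_le_sum (f := fun k => x k * (P ^ m) k j)
    (fun k _ => mul_nonneg (hx0 k) (pow_apply_nonneg hP.1 m k j)) (Finset.mem_univ i)

/-- `|z| - z` is a nonnegative stationary vector, so it vanishes (then `z ≥ 0`) or is positive
everywhere (then `z < 0`); either way a zero sum forces `z = 0`. -/
theorem eq_zero_of_vecMul_eq_of_sum_eq_zero (hP : IsStochastic P) (hirr : MCIrreducible P)
    {z : Fin n → ℝ} (hz : z ᵥ* P = z) (hsum : ∑ i, z i = 0) : z = 0 := by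
  set u := |z| - z
  have hu : u ᵥ* P = u := by rw [sub_vecMul, hP.abs_vecMul_eq hz, hz]
  have hu0 : 0 ≤ u := sub_nonneg.2 (le_abs_self z)
  by_cases h : ∀ k, u k ≤ 0
  · have hz0 : ∀ j ∈ Finset.univ, 0 ≤ z j := fun j _ =>
      (abs_nonneg _).trans (by simpa [u] using h j)
    exact funext fun j => (Finset.sum_eq_zero_iff_of_nonneg hz0).1 hsum j (Finset.mem_univ j)
  · simp only [not_forall, not_le] at h
    obtain ⟨k, hk⟩ := h
    have hneg : ∀ j, z j < 0 := fun j => by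
      have hzj : z j < |z j| := by simpa [u] using hP.pos_of_vecMul_eq hirr hu hu0 hk j
      by_contra! hj
      exact hzj.ne' (abs_of_nonneg hj)
    exact absurd hsum (Finset.sum_neg (fun j _ => hneg j) ⟨k, Finset.mem_univ k⟩).ne

theorem eq_sum_smul_of_vecMul_eq (hP : IsStochastic P) (hirr : MCIrreducible P)
    {p : Fin n → ℝ} (hp : IsProbVec p) (hpP : p ᵥ* P = p) {x : Fin n → ℝ} (hx : x ᵥ* P = x) :
    x = (∑ i, x i) • p := by
  refine sub_eq_zero.1 (hP.eq_zero_of_vecMul_eq_of_sum_eq_zero hirr ?_ ?_)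
  · rw [sub_vecMul, smul_vecMul, hx, hpP]
  · simp [Finset.sum_sub_distrib, ← Finset.mul_sum, hp.2]

end IsStochastic

theorem Pt_eq_add_smul_sub (P₀ P₁ : Matrix (Fin n) (Fin n) ℝ) (t : ℝ) :
    Pt P₀ P₁ t = P₀ + t • (P₁ - P₀) := by
  rw [Pt, sub_smul, one_smul, smul_sub]
  abel

theorem sub_vecMul_one_sub_eq_smul {P₀ P₁ : Matrix (Fin n) (Fin n) ℝ} {t : ℝ}
    {π₀ πt : Fin n → ℝ} (h₀ : π₀ ᵥ* P₀ = π₀) (ht : πt ᵥ* Pt P₀ P₁ t = πt) :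
    (πt - π₀) ᵥ* (1 - P₀) = t • (πt ᵥ* (P₁ - P₀)) := by
  rw [Pt_eq_add_smul_sub, vecMul_add, vecMul_smul] at ht
  rw [sub_vecMul, vecMul_sub, vecMul_sub, vecMul_one, vecMul_one, h₀, sub_self, sub_zero]
  nth_rw 1 [← ht]
  abel

end

theorem stmt_10_general {n : ℕ} (P₀ P₁ : Matrix (Fin n) (Fin n) ℝ)
    (hP₀ : IsStochastic P₀) (hP₀i : MCIrreducible P₀)
    (π : ℝ → Fin n → ℝ)
    (hπ : ∀ t ∈ Set.Icc (0 : ℝ) 1, IsProbVec (π t) ∧ (π t) ᵥ* (Pt P₀ P₁ t) = π t)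
    (σ : ℝ) (hσ : IsSmallestPosSingularValue (1 - P₀) σ)
    (s : ℝ) (hs : s ∈ Set.Icc (0 : ℝ) 1) :
    euclNorm (π s - π 0)
      ≤ (2 * s * (n : ℝ) / σ) * euclNorm ((π s) ᵥ* (P₁ - P₀)) := by
  obtain ⟨hπ₀, hπ₀P⟩ := hπ 0 (Set.left_mem_Icc.2 zero_le_one)
  obtain ⟨hπs, hπsP⟩ := hπ s hs
  rw [Pt_eq_add_smul_sub, zero_smul, add_zero] at hπ₀P
  set d := π s - π 0
  set w := π s ᵥ* (P₁ - P₀)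
  have hπ₀π₀ : π 0 ⬝ᵥ π 0 ≠ 0 := fun h => hπ₀.ne_zero (dotProduct_self_eq_zero.1 h)
  set q := d - (π 0 ⬝ᵥ d / π 0 ⬝ᵥ π 0) • π 0
  have hq : σ * euclNorm q ≤ s * euclNorm w := by
    refine (hσ.mul_euclNorm_le fun x hx => ?_).trans_eq ?_
    · rw [hP₀.eq_sum_smul_of_vecMul_eq hP₀i hπ₀ hπ₀P (vecMul_one_sub_eq_zero_iff.1 hx),
        smul_dotProduct, dotProduct_sub_smul_self_eq_zero hπ₀π₀, smul_zero]
    · rw [sub_vecMul, smul_vecMul, vecMul_one_sub_eq_zero_iff.2 hπ₀P, smul_zero, sub_zero,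
        sub_vecMul_one_sub_eq_smul hπ₀P hπsP, euclNorm_smul, abs_of_nonneg hs.1]
  have hn : (1 : ℝ) ≤ n := by exact_mod_cast hπ₀.pos_card
  have hcoef : √n * euclNorm (π 0) + 1 ≤ 2 * n := by
    have hsqrt : √n ≤ n := Real.sqrt_le_iff.2 ⟨by positivity, by nlinarith⟩
    nlinarith [hπ₀.euclNorm_le_one, Real.sqrt_nonneg n]
  calc euclNorm d ≤ (√n * euclNorm (π 0) + 1) * euclNorm q :=
        euclNorm_le_mul_euclNorm_sub_smul (by simp [d, Finset.sum_sub_distrib, hπs.2, hπ₀.2])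
          hπ₀.2 _
    _ ≤ 2 * n * (s * euclNorm w / σ) := by
        gcongr
        · exact Real.sqrt_nonneg _
        · rwa [le_div_iff₀' hσ.1]
    _ = 2 * s * n / σ * euclNorm w := by ring

/-- With σ the smallest nonzero singular value of I − P₀, for every
s ∈ [0,1], `‖π_s − π₀‖₂ ≤ (2 s n / σ) · ‖π_s (P₁ − P₀)‖₂`. -/
theorem stmt_10 {n : ℕ} (hn : 1 ≤ n) (P₀ P₁ : Matrix (Fin n) (Fin n) ℝ)
    (hP₀ : IsStochastic P₀) (hP₀i : MCIrreducible P₀) (hP₀a : MCAperiodic P₀)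
    (hP₁ : IsStochastic P₁) (hP₁i : MCIrreducible P₁) (hP₁a : MCAperiodic P₁)
    (π : ℝ → Fin n → ℝ)
    (hπ : ∀ t ∈ Set.Icc (0 : ℝ) 1, IsProbVec (π t) ∧ (π t) ᵥ* (Pt P₀ P₁ t) = π t)
    (σ : ℝ) (hσ : IsSmallestPosSingularValue (1 - P₀) σ)
    (s : ℝ) (hs : s ∈ Set.Icc (0 : ℝ) 1) :
    euclNorm (π s - π 0)
      ≤ (2 * s * (n : ℝ) / σ) * euclNorm ((π s) ᵥ* (P₁ - P₀)) :=
  stmt_10_general P₀ P₁ hP₀ hP₀i π hπ σ hσ s hs
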